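/- There exists a constant c > 0 such that for every n ≥ 1, every bipartite permutation graph H that contains, as induced subgraphs, all bipartite permutation graphs on at most n vertices having no induced 3K_{1,6} (the disjoint union of three copies of the star K_{1,6}) has at least c·n^{3/2} vertices. -/

import Mathlib

open SimpleGraph

/-- A bipartite permutation graph is a letter graph with the path decoder
over some finite alphabet. -/
def IsBPG {V : Type*} [Fintype V] (G : SimpleGraph V) : Prop :=
  ∃ (k : ℕ) (v : Fin (Fintype.card V) ≃ V) (w : Fin (Fintype.card V) → Fin k),
    ∀ i j : Fin (Fintype.card V), i < j →
      (G.Adj (v i) (v j) ↔ (w j : ℕ) = (w i : ℕ) + 1)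

/-- The disjoint union of three copies of the star `K_{1,6}`. -/
def threeK16 : SimpleGraph (Fin 3 × Fin 7) :=
  SimpleGraph.fromRel (fun x y => x.1 = y.1 ∧ x.2 = 0)

/-!
A letter graph with the path decoder is an induced subgraph of the letter plane `ℤ × ℤ`, in which
a point `(p, a)` (position, letter) is adjacent to `(q, a + 1)` exactly when `p < q`. There,
letters change by one along edges, two edges joining the same two letters never form an induced
`2K₂`, and a vertex carrying the middle letter of an induced monotone path `x - y - z` is adjacent
to `x` or to `z`. Applied to three consecutive teeth, these facts force the spine of an induced
comb with `k` teeth to be monotone except for at most one step, so its end letters differ by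
`k - 3`, `k - 2` or `k - 1`.

Let `m = n / 4`. For `t < n / 16`, the universal graph `H` contains the comb with `3 t + 3` teeth
whose two end spine vertices carry `m + 1` extra leaves each; it has at most `n` vertices and no
induced `3K_{1,6}`, as only its two hubs have degree above five. The letters of the hubs in `H`
are fat (at least `m + 1` vertices of `H` carry an adjacent letter) and lie at distance
`3 t`, `3 t + 1` or `3 t + 2`, so the `F` fat letters satisfy `n / 16 ≤ F²`. Each vertex
carries a letter adjacent to at most two letters, whence `F (m + 1) ≤ 2 |H|` and `n³ ≤ 4096 |H|²`.
-/

open Finset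

def letterPlane : SimpleGraph (ℤ × ℤ) where
  Adj x y := (x.1 < y.1 ∧ y.2 = x.2 + 1) ∨ (y.1 < x.1 ∧ x.2 = y.2 + 1)
  symm := ⟨fun _ _ => Or.symm⟩
  loopless := ⟨fun _ h => by rcases h with ⟨h, -⟩ | ⟨h, -⟩ <;> exact lt_irrefl _ h⟩

instance : DecidableRel letterPlane.Adj := fun x y =>
  inferInstanceAs (Decidable ((x.1 < y.1 ∧ y.2 = x.2 + 1) ∨ (y.1 < x.1 ∧ x.2 = y.2 + 1)))

namespace letterPlane

theorem adj_iff {x y : ℤ × ℤ} :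
    letterPlane.Adj x y ↔ (x.1 < y.1 ∧ y.2 = x.2 + 1) ∨ (y.1 < x.1 ∧ x.2 = y.2 + 1) :=
  Iff.rfl

theorem snd_eq_of_adj {x y : ℤ × ℤ} (h : letterPlane.Adj x y) : y.2 = x.2 + 1 ∨ y.2 = x.2 - 1 := by
  rw [adj_iff] at h
  omega

theorem twoK2_free {a a' b b' : ℤ × ℤ} (hab : a.2 = b.2) (hab' : a'.2 = b'.2)
    (ha : letterPlane.Adj a a') (hb : letterPlane.Adj b b') (hab'' : ¬ letterPlane.Adj a b')
    (hba' : ¬ letterPlane.Adj b a') : False := by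
  rw [adj_iff] at *
  omega

theorem adj_or_adj_of_monotone {x y z w : ℤ × ℤ} (hxy : letterPlane.Adj x y)
    (hyz : letterPlane.Adj y z) (hxz : x.2 + z.2 = 2 * y.2) (hw : w.2 = y.2) :
    letterPlane.Adj x w ∨ letterPlane.Adj w z := by
  simp only [adj_iff] at *
  omega

end letterPlane

variable {V V' : Type*}

/-- The adjacency pattern forces the `2 k` vertices to be distinct. -/
structure IsInducedComb (G : SimpleGraph V) (k : ℕ) (S L : ℕ → V) : Prop where
  adj_spine : ∀ i j, i < k → j < k → (G.Adj (S i) (S j) ↔ i + 1 = j ∨ j + 1 = i)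
  adj_tooth : ∀ i j, i < k → j < k → (G.Adj (S i) (L j) ↔ i = j)
  not_adj_teeth : ∀ i j, i < k → j < k → ¬ G.Adj (L i) (L j)

namespace IsInducedComb

section Graph

variable {G : SimpleGraph V} {k : ℕ} {S L : ℕ → V}

theorem adj_succ (h : IsInducedComb G k S L) {j : ℕ} (hj : j + 1 < k) :
    G.Adj (S j) (S (j + 1)) :=
  (h.adj_spine j (j + 1) (by omega) hj).2 (Or.inl rfl)

theorem adj_self (h : IsInducedComb G k S L) {j : ℕ} (hj : j < k) : G.Adj (S j) (L j) :=
  (h.adj_tooth j j hj hj).2 rfl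

theorem not_adj_of_ne (h : IsInducedComb G k S L) {i j : ℕ} (hi : i < k) (hj : j < k)
    (hij : i ≠ j) : ¬ G.Adj (S i) (L j) :=
  mt (h.adj_tooth i j hi hj).1 hij

theorem map {G' : SimpleGraph V'} (h : IsInducedComb G k S L) (f : G ↪g G') :
    IsInducedComb G' k (f ∘ S) (f ∘ L) where
  adj_spine i j hi hj := f.map_adj_iff.trans (h.adj_spine i j hi hj)
  adj_tooth i j hi hj := f.map_adj_iff.trans (h.adj_tooth i j hi hj)
  not_adj_teeth i j hi hj := f.map_adj_iff.not.2 (h.not_adj_teeth i j hi hj)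

end Graph

section LetterPlane

variable {k : ℕ} {S L : ℕ → ℤ × ℤ}

theorem letterPlane_teeth_ne_of_turn (h : IsInducedComb letterPlane k S L) {j : ℕ}
    (hj : j + 2 < k) (hc : (S (j + 2)).2 = (S j).2) : (L j).2 ≠ (L (j + 2)).2 := fun hd =>
  letterPlane.twoK2_free hc.symm hd (h.adj_self (by omega)) (h.adj_self hj)
    (h.not_adj_of_ne (by omega) hj (by omega)) (h.not_adj_of_ne hj (by omega) (by omega))

theorem letterPlane_tooth_eq_of_turn (h : IsInducedComb letterPlane k S L) {j : ℕ}
    (hj : j + 2 < k) (hc : (S (j + 2)).2 = (S j).2) : (L (j + 1)).2 = (S j).2 := by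
  by_contra hne
  have := letterPlane.snd_eq_of_adj (h.adj_succ (j := j) (by omega))
  have := letterPlane.snd_eq_of_adj (h.adj_self (j := j + 1) (by omega))
  by_cases h₀ : (L j).2 = (S (j + 1)).2
  · rcases letterPlane.adj_or_adj_of_monotone (x := S (j + 2)) (h.adj_succ hj).symm
      (h.adj_self (by omega)) (by omega) h₀ with hA | hA
    · exact h.not_adj_of_ne hj (by omega) (by omega) hA
    · exact h.not_adj_teeth j (j + 1) (by omega) (by omega) hA
  by_cases h₂ : (L (j + 2)).2 = (S (j + 1)).2
  · rcases letterPlane.adj_or_adj_of_monotone (h.adj_succ (by omega)) (h.adj_self (by omega))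
      (by omega) h₂ with hA | hA
    · exact h.not_adj_of_ne (by omega) hj (by omega) hA
    · exact h.not_adj_teeth (j + 2) (j + 1) hj (by omega) hA
  have := letterPlane.snd_eq_of_adj (h.adj_self (j := j) (by omega))
  have := letterPlane.snd_eq_of_adj (h.adj_self hj)
  exact h.letterPlane_teeth_ne_of_turn hj hc (by omega)

end LetterPlane

end IsInducedComb

/-- Constraints on the letters `c j` of the spine and `d j` of the teeth of an induced comb in
`letterPlane`, read off from windows of three consecutive teeth. -/
structure CombLetters (k : ℕ) (c d : ℕ → ℤ) : Prop where
  step : ∀ j, j + 1 < k → c (j + 1) = c j + 1 ∨ c (j + 1) = c j - 1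
  tooth : ∀ j, j < k → d j = c j + 1 ∨ d j = c j - 1
  straight_left : ∀ j, j + 2 < k → c j + c (j + 2) = 2 * c (j + 1) →
    d j = c (j + 1) → d (j + 1) ≠ c j
  straight_right : ∀ j, j + 2 < k → c j + c (j + 2) = 2 * c (j + 1) →
    d (j + 2) = c (j + 1) → d (j + 1) ≠ c (j + 2)
  turn_mid : ∀ j, j + 2 < k → c (j + 2) = c j → d (j + 1) = c j
  turn_side : ∀ j, j + 2 < k → c (j + 2) = c j → d j ≠ d (j + 2)

theorem IsInducedComb.combLetters {k : ℕ} {S L : ℕ → ℤ × ℤ}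
    (h : IsInducedComb letterPlane k S L) : CombLetters k (fun j => (S j).2) (fun j => (L j).2) where
  step _ hj := letterPlane.snd_eq_of_adj (h.adj_succ hj)
  tooth _ hj := letterPlane.snd_eq_of_adj (h.adj_self hj)
  straight_left j hj _ hd hd' := by
    rcases letterPlane.adj_or_adj_of_monotone (z := S (j + 2)) (h.adj_self (by omega)).symm
      (h.adj_succ hj) (by omega) hd with hA | hA
    · exact h.not_adj_teeth _ _ (by omega) (by omega) hA
    · exact h.not_adj_of_ne hj (by omega) (by omega) hA.symm
  straight_right j hj _ hd hd' := by
    rcases letterPlane.adj_or_adj_of_monotone (h.adj_succ (by omega)) (h.adj_self (by omega))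
      (by omega) hd with hA | hA
    · exact h.not_adj_of_ne (by omega) hj (by omega) hA
    · exact h.not_adj_teeth _ _ hj (by omega) hA
  turn_mid _ hj hc := h.letterPlane_tooth_eq_of_turn hj hc
  turn_side _ hj hc := h.letterPlane_teeth_ne_of_turn hj hc

theorem eq_add_mul_of_forall_succ_eq_add {c : ℕ → ℤ} {s : ℤ} {j : ℕ} :
    ∀ n, (∀ i, j ≤ i → i < j + n → c (i + 1) = c i + s) → c (j + n) = c j + n * s
  | 0, _ => by simp
  | n + 1, h => by
    rw [← add_assoc, h (j + n) (by omega) (by omega),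
      eq_add_mul_of_forall_succ_eq_add n fun i hi hin => h i hi (by omega)]
    push_cast
    ring

namespace CombLetters

variable {k : ℕ} {c d : ℕ → ℤ}

theorem forall_succ_eq_add (h : CombLetters k c d) {j : ℕ} {s : ℤ} (hc : c (j + 1) = c j + s)
    (hd : d (j + 1) = c (j + 1) + s) : ∀ i, j ≤ i → i + 1 < k → c (i + 1) = c i + s := by
  suffices ∀ i, j ≤ i → i + 1 < k → c (i + 1) = c i + s ∧ d (i + 1) = c (i + 1) + s from
    fun i hi hik => (this i hi hik).1
  intro i hi
  induction i, hi using Nat.le_induction with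
  | base => exact fun _ => ⟨hc, hd⟩
  | succ i hji ih =>
    intro hik
    obtain ⟨hc', hd'⟩ := ih (by omega)
    have := h.step i (by omega)
    have : c (i + 2) = c (i + 1) + 1 ∨ c (i + 2) = c (i + 1) - 1 := h.step (i + 1) hik
    have := h.tooth (i + 2) hik
    have := h.straight_right i hik
    have := h.turn_mid i hik
    show c (i + 2) = c (i + 1) + s ∧ d (i + 2) = c (i + 2) + s
    omega

theorem forall_succ_eq_add_of_zigzag (h : CombLetters k c d) {j : ℕ} {s : ℤ}
    (hc : c (j + 1) = c j - s) (hd₀ : d j = c j - s) (hd₁ : d (j + 1) = c (j + 1) + s) :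
    ∀ i, j < i → i + 1 < k → c (i + 1) = c i + s := by
  intro i hi hik
  have := h.step j (by omega)
  have : c (j + 2) = c (j + 1) + 1 ∨ c (j + 2) = c (j + 1) - 1 := h.step (j + 1) (by omega)
  have := h.tooth (j + 2) (by omega)
  have := h.straight_left j (by omega)
  have := h.turn_side j (by omega)
  exact h.forall_succ_eq_add (j := j + 1) (by omega : c (j + 2) = c (j + 1) + s)
    (by omega : d (j + 2) = c (j + 2) + s) i (by omega) hik

theorem sub_two_le_mul (h : CombLetters k c d) :
    ∀ n j s, j + n + 1 = k → c (j + 1) = c j + s → d j = c j - s → d (j + 1) = c (j + 1) - s →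
      (n : ℤ) - 2 ≤ s * (c (j + n) - c j) := by
  intro n
  induction n with
  | zero => simp
  | succ n ih =>
    intro j s hk hc hd₀ hd₁
    have hs : s = 1 ∨ s = -1 := by have := h.step j (by omega); omega
    rcases Nat.eq_zero_or_pos n with rfl | hn
    · rcases hs with rfl | rfl <;> simp [hc]
    rw [show j + (n + 1) = j + 1 + n by omega]
    have : c (j + 2) = c (j + 1) + 1 ∨ c (j + 2) = c (j + 1) - 1 := h.step (j + 1) (by omega)
    have := h.tooth (j + 2) (by omega)
    by_cases hturn : c (j + 2) = c (j + 1) - s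
    · have := h.turn_side j (by omega)
      have hsteady := h.forall_succ_eq_add_of_zigzag (j := j + 1) hturn hd₁
        (by omega : d (j + 2) = c (j + 2) + s)
      have := eq_add_mul_of_forall_succ_eq_add (c := c) (j := j + 2) (n - 1)
        fun i hi hin => hsteady i (by omega) (by omega)
      rw [show j + 2 + (n - 1) = j + 1 + n by omega] at this
      rcases hs with rfl | rfl <;> push_cast [Nat.cast_sub hn] at this ⊢ <;> omega
    by_cases hback : d (j + 2) = c (j + 2) - s
    · have := ih (j + 1) s (by omega) (by omega : c (j + 2) = c (j + 1) + s) hd₁ hback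
      rcases hs with rfl | rfl <;> push_cast at this ⊢ <;> omega
    · have hsteady := h.forall_succ_eq_add (j := j + 1)
        (by omega : c (j + 2) = c (j + 1) + s) (by omega : d (j + 2) = c (j + 2) + s)
      have := eq_add_mul_of_forall_succ_eq_add (c := c) (j := j + 1) n
        fun i hi hin => hsteady i hi (by omega)
      rcases hs with rfl | rfl <;> push_cast at this ⊢ <;> omega

theorem abs_sub_le (h : CombLetters k c d) : ∀ n, n < k → |c n - c 0| ≤ n
  | 0, _ => by simp
  | n + 1, hn => by
    have := h.step n hn
    have := abs_le.1 (h.abs_sub_le n (by omega))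
    rw [abs_le]
    push_cast
    omega

theorem sub_three_le_abs_sub (h : CombLetters k c d) : (k : ℤ) - 3 ≤ |c (k - 1) - c 0| := by
  rcases Nat.lt_or_ge k 4 with hk | hk
  · have := abs_nonneg (c (k - 1) - c 0)
    omega
  obtain ⟨s, hs, hc⟩ : ∃ s : ℤ, (s = 1 ∨ s = -1) ∧ c 1 = c 0 + s :=
    ⟨c 1 - c 0, by have : c 1 = c 0 + 1 ∨ c 1 = c 0 - 1 := h.step 0 (by omega); omega, by ring⟩
  have := h.tooth 0 (by omega)
  have := h.tooth 1 (by omega)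
  have := le_abs_self (c (k - 1) - c 0)
  have := neg_abs_le (c (k - 1) - c 0)
  by_cases hd₁ : d 1 = c 1 + s
  · have := eq_add_mul_of_forall_succ_eq_add (c := c) (j := 0) (k - 1)
      fun i hi hik => h.forall_succ_eq_add hc hd₁ i hi (by omega)
    rw [zero_add] at this
    rcases hs with rfl | rfl <;> push_cast [Nat.cast_sub (by omega : 1 ≤ k)] at this <;> omega
  by_cases hd₀ : d 0 = c 0 + s
  · have := eq_add_mul_of_forall_succ_eq_add (c := c) (j := 1) (k - 2)
      fun i hi hik => h.forall_succ_eq_add_of_zigzag (j := 0) (by omega : c 1 = c 0 - -s)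
        (by omega) (by omega : d 1 = c 1 + -s) i hi (by omega)
    rw [show 1 + (k - 2) = k - 1 by omega] at this
    rcases hs with rfl | rfl <;> push_cast [Nat.cast_sub (by omega : 2 ≤ k)] at this <;> omega
  · have := h.sub_two_le_mul (k - 1) 0 s (by omega) hc (by omega) (by omega : d 1 = c 1 - s)
    rw [zero_add] at this
    rcases hs with rfl | rfl <;> push_cast [Nat.cast_sub (by omega : 1 ≤ k)] at this <;> omega

end CombLetters

def letterGraph {n : ℕ} (ω : Fin n → ℕ) : SimpleGraph (Fin n) :=
  letterPlane.comap fun i => (((i : ℕ) : ℤ), (ω i : ℤ))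

instance {n : ℕ} (ω : Fin n → ℕ) : DecidableRel (letterGraph ω).Adj :=
  inferInstanceAs (DecidableRel (letterPlane.comap _).Adj)

theorem letterGraph_adj {n : ℕ} {ω : Fin n → ℕ} {i j : Fin n} :
    (letterGraph ω).Adj i j ↔ (i < j ∧ ω j = ω i + 1) ∨ (j < i ∧ ω i = ω j + 1) := by
  simp only [letterGraph, comap_adj, letterPlane.adj_iff]
  omega

def letterGraph.toLetterPlane {n : ℕ} (ω : Fin n → ℕ) : letterGraph ω ↪g letterPlane :=
  Embedding.comap ⟨fun i : Fin n => (((i : ℕ) : ℤ), (ω i : ℤ)), fun i j h => by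
    simp only [Prod.mk.injEq, Nat.cast_inj] at h; exact Fin.ext h.1⟩ letterPlane

theorem isBPG_letterGraph {n : ℕ} (ω : Fin n → ℕ) : IsBPG (letterGraph ω) := by
  refine ⟨univ.sup ω + 1, finCongr (Fintype.card_fin n),
    fun i => ⟨ω (finCongr (Fintype.card_fin n) i), Nat.lt_succ_of_le (le_sup (mem_univ _))⟩,
    fun i j hij => ?_⟩
  simp only [letterGraph_adj, finCongr_apply, Fin.lt_def, Fin.val_cast] at hij ⊢
  omega

theorem IsBPG.exists_letterGraph_iso [Fintype V] {G : SimpleGraph V} (h : IsBPG G) :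
    ∃ ω : Fin (Fintype.card V) → ℕ, Nonempty (letterGraph ω ≃g G) := by
  obtain ⟨k, v, w, hvw⟩ := h
  refine ⟨fun i => w i, ⟨v, fun {i j} => ?_⟩⟩
  rw [letterGraph_adj]
  rcases lt_trichotomy i j with hij | rfl | hij
  · rw [hvw i j hij]
    omega
  · simp
  · rw [G.adj_comm, hvw j i hij]
    omega

theorem letterGraph_const_zero (n : ℕ) : letterGraph (fun _ : Fin n => 0) = ⊥ := by
  ext i j
  simp [letterGraph_adj]

instance : DecidableRel threeK16.Adj := fun x y =>
  inferInstanceAs (Decidable (x ≠ y ∧ ((x.1 = y.1 ∧ x.2 = 0) ∨ (y.1 = x.1 ∧ y.2 = 0))))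

theorem threeK16_degree_center (i : Fin 3) : threeK16.degree (i, 0) = 6 := by
  revert i
  decide

theorem threeK16_free_of_forall_degree [Fintype V] {G : SimpleGraph V} [DecidableRel G.Adj]
    (u₁ u₂ : V) (h : ∀ v, 6 ≤ G.degree v → v = u₁ ∨ v = u₂) : ¬ Nonempty (threeK16 ↪g G) := by
  classical
  rintro ⟨f⟩
  have hcenter i : f (i, 0) ∈ ({u₁, u₂} : Finset V) := by
    simpa using h _ ((threeK16_degree_center i).symm.le.trans (f.toCopy.degree_le (i, 0)))
  have hinj : Function.Injective fun i : Fin 3 => f (i, 0) := fun i j hij => by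
    simpa using f.injective hij
  have := (card_le_card_of_injOn (s := univ) _ (fun i _ => hcenter i) hinj.injOn).trans card_le_two
  simp at this

theorem threeK16_free_bot : ¬ Nonempty (threeK16 ↪g (⊥ : SimpleGraph V)) :=
  fun ⟨f⟩ => (f.map_adj_iff.2 (by decide : threeK16.Adj (0, 0) (0, 1))).elim

/-- Positions `0, …, m` carry the letter `0` and `m + k + 1, …, 2m + k + 1` the letter `k + 1`
(the leaves of the two hubs), `m + 1 + j` carries `j + 1` (the spine, `j < k`), and
`2m + 2k + 1 - j` carries `j + 2` (the tooth of spine vertex `j`). -/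
def hubCombWord (m k : ℕ) (p : Fin (2 * m + 2 * k + 2)) : ℕ :=
  min (min (p - m) (k + 1)) (2 * m + 2 * k + 3 - p)

def hubComb (m k : ℕ) : SimpleGraph (Fin (2 * m + 2 * k + 2)) :=
  letterGraph (hubCombWord m k)

instance (m k : ℕ) : DecidableRel (hubComb m k).Adj :=
  inferInstanceAs (DecidableRel (letterGraph _).Adj)

def hubComb.spine (m k j : ℕ) : Fin (2 * m + 2 * k + 2) :=
  ⟨min (m + 1 + j) (2 * m + 2 * k + 1), by omega⟩

def hubComb.tooth (m k j : ℕ) : Fin (2 * m + 2 * k + 2) :=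
  ⟨2 * m + 2 * k + 1 - j, by omega⟩

theorem hubComb_adj {m k : ℕ} {p q : Fin (2 * m + 2 * k + 2)} :
    (hubComb m k).Adj p q ↔
      (p < q ∧ hubCombWord m k q = hubCombWord m k p + 1) ∨
      (q < p ∧ hubCombWord m k p = hubCombWord m k q + 1) :=
  letterGraph_adj

theorem isInducedComb_hubComb (m k : ℕ) :
    IsInducedComb (hubComb m k) k (hubComb.spine m k) (hubComb.tooth m k) where
  adj_spine i j hi hj := by
    simp only [hubComb_adj, hubCombWord, hubComb.spine, Fin.lt_def]
    omega
  adj_tooth i j hi hj := by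
    simp only [hubComb_adj, hubCombWord, hubComb.spine, hubComb.tooth, Fin.lt_def]
    omega
  not_adj_teeth i j hi hj := by
    simp only [hubComb_adj, hubCombWord, hubComb.tooth, Fin.lt_def]
    omega

theorem hubComb_degree_le_five {m k : ℕ} (hk : 1 ≤ k) {z : Fin (2 * m + 2 * k + 2)}
    (h₁ : (z : ℕ) ≠ m + 1) (h₂ : (z : ℕ) ≠ m + k) : (hubComb m k).degree z ≤ 5 := by
  have hsub : Set.MapsTo Fin.val ((hubComb m k).neighborFinset z : Set (Fin (2 * m + 2 * k + 2)))
      (([z - 1, z + 1, 3 * m + 2 * k + 2 - z, m + 1, m + k] : List ℕ).toFinset : Set ℕ) := by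
    intro x hx
    simp only [coe_neighborFinset, Set.mem_ofPred_eq, mem_neighborSet, hubComb_adj, hubCombWord,
      Fin.lt_def, List.coe_toFinset, List.mem_cons, List.not_mem_nil, or_false] at hx ⊢
    omega
  rw [← card_neighborFinset_eq_degree]
  exact (card_le_card_of_injOn _ hsub Fin.val_injective.injOn).trans (List.toFinset_card_le _)

theorem succ_le_hubComb_degree_spine_zero (m k : ℕ) :
    m + 1 ≤ (hubComb m k).degree (hubComb.spine m k 0) := by
  rw [← card_neighborFinset_eq_degree]
  calc m + 1 = #(Iic (⟨m, by omega⟩ : Fin (2 * m + 2 * k + 2))) := by rw [Fin.card_Iic]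
    _ ≤ _ := card_le_card fun x hx => by
      rw [SimpleGraph.mem_neighborFinset]
      simp only [mem_Iic, Fin.le_def, hubComb_adj, hubCombWord, hubComb.spine, Fin.lt_def] at hx ⊢
      omega

theorem succ_le_hubComb_degree_spine_pred {m k : ℕ} (hk : 1 ≤ k) :
    m + 1 ≤ (hubComb m k).degree (hubComb.spine m k (k - 1)) := by
  rw [← card_neighborFinset_eq_degree]
  calc m + 1
      = #(Icc (⟨m + k + 1, by omega⟩ : Fin (2 * m + 2 * k + 2)) ⟨2 * m + k + 1, by omega⟩) := by
        simp only [Fin.card_Icc]; omega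
    _ ≤ _ := card_le_card fun x hx => by
      rw [SimpleGraph.mem_neighborFinset]
      simp only [mem_Icc, Fin.le_def, hubComb_adj, hubCombWord, hubComb.spine, Fin.lt_def] at hx ⊢
      omega

theorem threeK16_free_hubComb {m k : ℕ} (hk : 1 ≤ k) : ¬ Nonempty (threeK16 ↪g hubComb m k) := by
  refine threeK16_free_of_forall_degree (hubComb.spine m k 0) (hubComb.spine m k (k - 1))
    fun v hv => ?_
  by_contra hne
  simp only [hubComb.spine, Fin.ext_iff, not_or] at hne
  exact absurd hv (not_le.2 (Nat.lt_succ_of_le (hubComb_degree_le_five hk (by omega) (by omega))))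

def adjacentLetterCount {n : ℕ} (ω : Fin n → ℕ) (a : ℕ) : ℕ :=
  #{x | ω x + 1 = a ∨ ω x = a + 1}

theorem letterGraph_degree_le {n : ℕ} (ω : Fin n → ℕ) (x : Fin n) :
    (letterGraph ω).degree x ≤ adjacentLetterCount ω (ω x) := by
  refine card_le_card fun y hy => ?_
  rw [SimpleGraph.mem_neighborFinset, letterGraph_adj] at hy
  simp only [mem_filter, mem_univ, true_and]
  omega

def fatLetters {n : ℕ} (ω : Fin n → ℕ) (m : ℕ) : Finset ℕ :=
  (univ.image ω).filter fun a => m < adjacentLetterCount ω a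

theorem card_fatLetters_mul_le {n : ℕ} (ω : Fin n → ℕ) (m : ℕ) :
    #(fatLetters ω m) * (m + 1) ≤ 2 * n := by
  have := card_mul_le_card_mul (fun a (x : Fin n) => ω x + 1 = a ∨ ω x = a + 1)
    (s := fatLetters ω m) (t := univ) (m := m + 1) (n := 2)
    (fun a ha => (mem_filter.1 ha).2)
    (fun x _ => (card_le_card fun a ha => by
      simp only [bipartiteBelow, mem_filter, mem_insert, mem_singleton] at ha ⊢
      omega : _ ≤ #({ω x + 1, ω x - 1} : Finset ℕ)).trans card_le_two)
  simpa [mul_comm] using this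

theorem exists_fatLetters_of_hubComb_embedding {n m k : ℕ} {ω : Fin n → ℕ} (hk : 1 ≤ k)
    (e : hubComb m k ↪g letterGraph ω) :
    ∃ a ∈ fatLetters ω m, ∃ b ∈ fatLetters ω m,
      (k : ℤ) - 3 ≤ |(a : ℤ) - b| ∧ |(a : ℤ) - b| ≤ k - 1 := by
  have hL := ((isInducedComb_hubComb m k).map ((letterGraph.toLetterPlane ω).comp e)).combLetters
  have hfat j (hj : m + 1 ≤ (hubComb m k).degree (hubComb.spine m k j)) :
      ω (e (hubComb.spine m k j)) ∈ fatLetters ω m :=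
    mem_filter.2 ⟨mem_image_of_mem _ (mem_univ _),
      hj.trans ((e.toCopy.degree_le _).trans (letterGraph_degree_le _ _))⟩
  refine ⟨_, hfat (k - 1) (succ_le_hubComb_degree_spine_pred hk),
    _, hfat 0 (succ_le_hubComb_degree_spine_zero m k), hL.sub_three_le_abs_sub, ?_⟩
  have := hL.abs_sub_le (k - 1) (by omega)
  push_cast [Nat.cast_sub hk] at this
  exact this

theorem le_card_sq_of_forall_exists {F : Finset ℕ} {T : ℕ}
    (h : ∀ t < T, ∃ a ∈ F, ∃ b ∈ F, 3 * (t : ℤ) ≤ |(a : ℤ) - b| ∧ |(a : ℤ) - b| ≤ 3 * t + 2) :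
    T ≤ #F ^ 2 :=
  calc T = #(range T) := (card_range T).symm
    _ ≤ #((F ×ˢ F).image fun p => ((p.1 : ℤ) - p.2).natAbs / 3) := card_le_card fun t ht => by
        obtain ⟨a, ha, b, hb, h₁, h₂⟩ := h t (mem_range.1 ht)
        rw [Int.abs_eq_natAbs] at h₁ h₂
        exact mem_image.2 ⟨(a, b), mem_product.2 ⟨ha, hb⟩, by omega⟩
    _ ≤ #(F ×ˢ F) := card_image_le
    _ = #F ^ 2 := by rw [card_product, sq]

theorem cube_le_of_counts {n N F : ℕ} (hN : n ≤ N) (hT : n / 16 ≤ F ^ 2)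
    (hF : F * (n / 4 + 1) ≤ 2 * N) : n ^ 3 ≤ 4096 * N ^ 2 := by
  rcases lt_or_ge n 32 with hn | hn
  · calc n ^ 3 = n * n * n := by ring
      _ ≤ N * N * 32 := by gcongr
      _ ≤ 4096 * N ^ 2 := by nlinarith
  · calc n ^ 3 = n * n * n := by ring
      _ ≤ (4 * (n / 4 + 1)) * (4 * (n / 4 + 1)) * (32 * F ^ 2) := by gcongr <;> omega
      _ = 512 * (F * (n / 4 + 1)) ^ 2 := by ring
      _ ≤ 512 * (2 * N) ^ 2 := by gcongr
      _ ≤ 4096 * N ^ 2 := by nlinarith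

theorem mul_rpow_three_halves_le {n N : ℕ} (h : n ^ 3 ≤ 4096 * N ^ 2) :
    1 / 64 * (n : ℝ) ^ ((3 : ℝ) / 2) ≤ N := by
  have hsq : ((n : ℝ) ^ ((3 : ℝ) / 2)) ^ 2 = (n : ℝ) ^ 3 := by
    rw [← Real.rpow_natCast, ← Real.rpow_mul (Nat.cast_nonneg n)]
    norm_num
  have h' : (n : ℝ) ^ 3 ≤ 4096 * (N : ℝ) ^ 2 := by exact_mod_cast h
  rw [← pow_le_pow_iff_left₀ (by positivity) (Nat.cast_nonneg N) two_ne_zero, mul_pow, hsq]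
  linarith

/-- Every bipartite permutation graph containing all `3K_{1,6}`-free bipartite
permutation graphs on at most `n` vertices as induced subgraphs has at least
`c · n^{3/2}` vertices. -/
theorem universal_3K16_free_lower_bound :
    ∃ c : ℝ, 0 < c ∧ ∀ n : ℕ, 1 ≤ n →
      ∀ (W : Type) [Fintype W] (H : SimpleGraph W), IsBPG H →
        (∀ (U : Type) [Fintype U] (G : SimpleGraph U), IsBPG G →
          Fintype.card U ≤ n → ¬ Nonempty (threeK16 ↪g G) →
          Nonempty (G ↪g H)) →
        c * (n : ℝ) ^ ((3 : ℝ) / 2) ≤ Fintype.card W := by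
  refine ⟨1 / 64, by norm_num, fun n _ W _ H hH huniv => mul_rpow_three_halves_le ?_⟩
  obtain ⟨ω, ⟨φ⟩⟩ := hH.exists_letterGraph_iso
  have hN : n ≤ Fintype.card W := by
    obtain ⟨e⟩ := huniv (Fin n) ⊥ (letterGraph_const_zero n ▸ isBPG_letterGraph _) (by simp)
      threeK16_free_bot
    simpa using Fintype.card_le_of_injective e e.injective
  have hT : n / 16 ≤ #(fatLetters ω (n / 4)) ^ 2 := le_card_sq_of_forall_exists fun t ht => by
    obtain ⟨e⟩ := huniv _ (hubComb (n / 4) (3 * t + 3)) (isBPG_letterGraph _) (by simp; omega)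
      (threeK16_free_hubComb (by omega))
    obtain ⟨a, ha, b, hb, h₁, h₂⟩ :=
      exists_fatLetters_of_hubComb_embedding (by omega) (e.trans φ.symm.toEmbedding)
    exact ⟨a, ha, b, hb, by push_cast at h₁; linarith, by push_cast at h₂; linarith⟩
  exact cube_le_of_counts hN hT (card_fatLetters_mul_le ω _)
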